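/- Cauchy mean reversiblization: Let p, q > 0 with p ≠ q, and define g : [0,∞) → [0,∞) by g(t) = (q(t^p − 1)/(p(t^q − 1)))^{1/(p−q)} for t ∉ {0,1}, g(1) = 1, and g(0) = (q/p)^{1/(p−q)}. Then g is a balancing function, i.e. g(t) = t·g(1/t) for all t > 0, and consequently for every L ∈ ℒ the Cauchy mean reversiblization C_{p,q} := F_g belongs to ℒ(π). -/

import Mathlib

open Finset

noncomputable section

variable {X : Type*} [Fintype X] [DecidableEq X]

/-- Build a matrix with prescribed off-diagonal entries and diagonal entries
chosen so that every row sums to zero. -/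
def rowZero (F : X → X → ℝ) : X → X → ℝ :=
  fun x y => if x = y then -(∑ z ∈ Finset.univ.erase x, F x z) else F x y

/-- `L` is a Markov infinitesimal generator: nonnegative off-diagonal entries
and zero row sums. -/
def IsGen (L : X → X → ℝ) : Prop :=
  (∀ x y, x ≠ y → 0 ≤ L x y) ∧ (∀ x, ∑ y, L x y = 0)

/-- `L` is a `π`-reversible Markov generator, i.e. `L ∈ ℒ(π)`. -/
def IsRev (π : X → ℝ) (L : X → X → ℝ) : Prop :=
  IsGen L ∧ ∀ x y, π x * L x y = π y * L y x

/-- `π` is a probability distribution with full support. -/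
def IsProb (π : X → ℝ) : Prop := (∀ x, 0 < π x) ∧ ∑ x, π x = 1

/-- The `π`-dual `L_π` of `L`: off-diagonal entries `π(y)L(y,x)/π(x)`,
diagonal entries make row sums zero. -/
def dual (π : X → ℝ) (L : X → X → ℝ) : X → X → ℝ :=
  rowZero (fun x y => π y * L y x / π x)

/-- The `f`-divergence between generators: `Df f π M L = D_f(M‖L)`.
(The convention `0·f(a/0) = 0` holds automatically since `a/0 = 0` and
the factor `L x y = 0` kills the term.) -/
def Df (f : ℝ → ℝ) (π : X → ℝ) (M L : X → X → ℝ) : ℝ :=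
  ∑ x, π x * ∑ y ∈ Finset.univ.erase x, L x y * f (M x y / L x y)

/-- The locally-balanced transformation `F_g` of `L`: for `x ≠ y`,
`F_g(x,y) = L(x,y)` if `L(x,y) = L_π(x,y)`;
`F_g(x,y) = g(0)·L_π(x,y)` if `L(x,y) = 0` (and then `L_π(x,y) > 0`);
`F_g(x,y) = g(L_π(x,y)/L(x,y))·L(x,y)` otherwise;
diagonal entries make row sums zero. -/
def Fg (π : X → ℝ) (g : ℝ → ℝ) (L : X → X → ℝ) : X → X → ℝ :=
  rowZero (fun x y =>
    if L x y = dual π L x y then L x y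
    else if L x y = 0 then g 0 * dual π L x y
    else g (dual π L x y / L x y) * L x y)

/-- The balancing function of the Cauchy mean reversiblization `C_{p,q}`:
`g(t) = (q(t^p − 1)/(p(t^q − 1)))^{1/(p−q)}` for `t ∉ {0,1}`, `g(1) = 1`,
`g(0) = (q/p)^{1/(p−q)}`. -/
def gCauchy (p q : ℝ) : ℝ → ℝ := fun t =>
  if t = 0 then (q / p) ^ (1 / (p - q))
  else if t = 1 then 1
  else (q * (t ^ p - 1) / (p * (t ^ q - 1))) ^ (1 / (p - q))

lemma rowZero_sum (F : X → X → ℝ) (x : X) : ∑ y, rowZero F x y = 0 := by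
  rw [← Finset.add_sum_erase _ _ (Finset.mem_univ x)]
  have h : ∑ y ∈ Finset.univ.erase x, rowZero F x y
      = ∑ y ∈ Finset.univ.erase x, F x y := by
    refine Finset.sum_congr rfl fun y hy => ?_
    have hxy : ¬ x = y := fun h => (Finset.mem_erase.mp hy).1 h.symm
    simp [rowZero, hxy]
  rw [h]
  simp [rowZero]

lemma key_rev (πx πy a a' b b' : ℝ) (hπx : 0 < πx) (hπy : 0 < πy)
    (ha : 0 ≤ a) (ha' : 0 ≤ a') (hb : πx * b = πy * a') (hb' : πy * b' = πx * a)
    (g : ℝ → ℝ) (hbal : ∀ t, 0 < t → g t = t * g (1/t)) :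
    πx * (if a = b then a else if a = 0 then g 0 * b else g (b/a) * a)
      = πy * (if a' = b' then a' else if a' = 0 then g 0 * b' else g (b'/a') * a') := by
  by_cases h1 : a = b
  · have h1' : a' = b' := by
      subst h1
      exact mul_left_cancel₀ hπy.ne' (by linarith)
    rw [if_pos h1, if_pos h1']
    rw [h1]; exact hb
  · rw [if_neg h1]
    by_cases h2 : a = 0
    · have hbne : b ≠ 0 := fun h => h1 (h2.trans h.symm)
      have hb'0 : b' = 0 := by
        have h0 : πy * b' = 0 := by rw [hb', h2, mul_zero]
        exact (mul_eq_zero.mp h0).resolve_left hπy.ne'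
      have ha'ne : a' ≠ 0 := by
        intro h
        apply hbne
        have h0 : πx * b = 0 := by rw [hb, h, mul_zero]
        exact (mul_eq_zero.mp h0).resolve_left hπx.ne'
      have h1' : a' ≠ b' := by rw [hb'0]; exact ha'ne
      rw [if_pos h2, if_neg h1', if_neg ha'ne, hb'0, zero_div]
      linear_combination (g 0) * hb
    · rw [if_neg h2]
      have hapos : 0 < a := lt_of_le_of_ne ha (Ne.symm h2)
      by_cases h3 : b = 0
      · have ha'0 : a' = 0 := by
          have h0 : πy * a' = 0 := by rw [← hb, h3, mul_zero]
          exact (mul_eq_zero.mp h0).resolve_left hπy.ne'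
        have hb'ne : b' ≠ 0 := by
          intro h
          have h0 : πx * a = 0 := by rw [← hb', h, mul_zero]
          exact h2 ((mul_eq_zero.mp h0).resolve_left hπx.ne')
        have h1' : a' ≠ b' := by rw [ha'0]; exact fun h => hb'ne h.symm
        rw [h3, zero_div, if_neg h1', if_pos ha'0]
        linear_combination (-(g 0)) * hb'
      · have hb0 : 0 ≤ b := by nlinarith [mul_nonneg hπy.le ha']
        have hbpos : 0 < b := lt_of_le_of_ne hb0 (Ne.symm h3)
        have ha'pos : 0 < a' := by nlinarith [mul_pos hπx hbpos]
        have hb'pos : 0 < b' := by nlinarith [mul_pos hπx hapos]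
        have h1' : a' ≠ b' := by
          intro h
          apply h1
          apply mul_left_cancel₀ hπx.ne'
          rw [← h] at hb'
          linarith [hb, hb']
        rw [if_neg h1', if_neg ha'pos.ne']
        have hkey : πx * πy * (b' * b) = πx * πy * (a * a') := by
          linear_combination (πx * b) * hb' + (πx * a) * hb
        have hbb : b' * b = a * a' :=
          mul_left_cancel₀ (by positivity) hkey
        have ht : b' / a' = a / b := by
          rw [div_eq_div_iff ha'pos.ne' h3]
          exact hbb
        rw [ht]
        have hbalt := hbal (b / a) (div_pos hbpos hapos)
        have hinv : 1 / (b / a) = a / b := by rw [one_div, inv_div]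
        rw [hinv] at hbalt
        rw [hbalt]
        have hcalc : b / a * g (a / b) * a = b * g (a / b) := by
          field_simp
        rw [hcalc]
        linear_combination (g (a / b)) * hb

lemma Fg_isRev (π : X → ℝ) (hπ : ∀ x, 0 < π x) (g : ℝ → ℝ)
    (hg0 : ∀ t, 0 ≤ t → 0 ≤ g t) (hbal : ∀ t, 0 < t → g t = t * g (1/t))
    (L : X → X → ℝ) (hL : IsGen L) : IsRev π (Fg π g L) := by
  obtain ⟨hLnn, _⟩ := hL
  have hFg : ∀ x y, x ≠ y → Fg π g L x y =
      (if L x y = π y * L y x / π x then L x y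
       else if L x y = 0 then g 0 * (π y * L y x / π x)
       else g ((π y * L y x / π x) / L x y) * L x y) := by
    intro x y hxy
    simp [Fg, rowZero, dual, hxy]
  refine ⟨⟨fun x y hxy => ?_, fun x => rowZero_sum _ x⟩, fun x y => ?_⟩
  · rw [hFg x y hxy]
    have hd : 0 ≤ π y * L y x / π x := by
      have := hLnn y x hxy.symm
      have := hπ x
      have := hπ y
      positivity
    split_ifs with h1 h2
    · exact hLnn x y hxy
    · exact mul_nonneg (hg0 0 le_rfl) hd
    · exact mul_nonneg (hg0 _ (div_nonneg hd (hLnn x y hxy))) (hLnn x y hxy)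
  · by_cases hxy : x = y
    · rw [hxy]
    · rw [hFg x y hxy, hFg y x (fun h => hxy h.symm)]
      have hb : π x * (π y * L y x / π x) = π y * L y x := by
        field_simp [(hπ x).ne']
      have hb' : π y * (π x * L x y / π y) = π x * L x y := by
        field_simp [(hπ y).ne']
      exact key_rev (π x) (π y) (L x y) (L y x) (π y * L y x / π x)
        (π x * L x y / π y) (hπ x) (hπ y) (hLnn x y hxy)
        (hLnn y x fun h => hxy h.symm) hb hb' g hbal

lemma base_pos (p q t : ℝ) (hp : 0 < p) (hq : 0 < q) (ht : 0 < t) (ht1 : t ≠ 1) :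
    0 < q * (t ^ p - 1) / (p * (t ^ q - 1)) := by
  rcases lt_or_gt_of_ne ht1 with h | h
  · have h1 : t ^ p < 1 := Real.rpow_lt_one ht.le h hp
    have h2 : t ^ q < 1 := Real.rpow_lt_one ht.le h hq
    apply div_pos_of_neg_of_neg <;> nlinarith
  · have h1 : 1 < t ^ p := Real.one_lt_rpow_iff_of_pos ht |>.mpr (Or.inl ⟨h, hp⟩)
    have h2 : 1 < t ^ q := Real.one_lt_rpow_iff_of_pos ht |>.mpr (Or.inl ⟨h, hq⟩)
    apply div_pos <;> nlinarith

/-- **Cauchy mean reversiblization** (Theorem 4.1): for `p, q > 0` with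
`p ≠ q`, `gCauchy p q` is a balancing function, i.e. `g(t) = t·g(1/t)` for all
`t > 0`, and consequently for every `L ∈ ℒ` the Cauchy mean reversiblization
`C_{p,q} = F_g` belongs to `ℒ(π)`. -/
theorem cauchy_mean_reversiblization (π : X → ℝ) (hπ : IsProb π)
    (p q : ℝ) (hp : 0 < p) (hq : 0 < q) (hpq : p ≠ q) :
    (∀ t : ℝ, 0 < t → gCauchy p q t = t * gCauchy p q (1 / t)) ∧
    (∀ L : X → X → ℝ, IsGen L → IsRev π (Fg π (gCauchy p q) L)) := by
  have hbal : ∀ t : ℝ, 0 < t → gCauchy p q t = t * gCauchy p q (1 / t) := by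
    intro t ht
    by_cases ht1 : t = 1
    · subst ht1; simp [gCauchy]
    · have ht0 : t ≠ 0 := ht.ne'
      have hit0 : (1 : ℝ) / t ≠ 0 := by positivity
      have hit1 : (1 : ℝ) / t ≠ 1 := by
        intro h
        rw [div_eq_one_iff_eq ht0] at h
        exact ht1 h.symm
      simp only [gCauchy, if_neg ht0, if_neg ht1, if_neg hit0, if_neg hit1]
      have htp : (0 : ℝ) < t ^ p := Real.rpow_pos_of_pos ht p
      have htq : (0 : ℝ) < t ^ q := Real.rpow_pos_of_pos ht q
      have h1 : (1 / t) ^ p = (t ^ p)⁻¹ := by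
        rw [one_div, ← Real.inv_rpow ht.le]
      have h2 : (1 / t) ^ q = (t ^ q)⁻¹ := by
        rw [one_div, ← Real.inv_rpow ht.le]
      rw [h1, h2]
      have hB : 0 < q * (t ^ p - 1) / (p * (t ^ q - 1)) := base_pos p q t hp hq ht ht1
      have hden : p * (t ^ q - 1) ≠ 0 := by
        intro h; rw [h, div_zero] at hB; exact lt_irrefl 0 hB
      have htq1 : t ^ q - 1 ≠ 0 := fun h => hden (by rw [h, mul_zero])
      have htq1' : (t ^ q)⁻¹ - 1 ≠ 0 := by
        intro h
        apply htq1
        have : (t ^ q)⁻¹ = 1 := by linarith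
        rw [inv_eq_one] at this
        rw [this]; ring
      have hB' : q * ((t ^ p)⁻¹ - 1) / (p * ((t ^ q)⁻¹ - 1))
          = (q * (t ^ p - 1) / (p * (t ^ q - 1))) * (t ^ q / t ^ p) := by
        have hd1 : p * ((t ^ q)⁻¹ - 1) ≠ 0 := mul_ne_zero hp.ne' htq1'
        have hd2 : p * (t ^ q - 1) * t ^ p ≠ 0 := mul_ne_zero hden htp.ne'
        rw [div_mul_div_comm, div_eq_div_iff hd1 hd2]
        field_simp
        ring
      rw [hB']
      rw [Real.mul_rpow hB.le (by positivity)]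
      have hsub : t ^ q / t ^ p = t ^ (q - p) := (Real.rpow_sub ht q p).symm
      rw [hsub, ← Real.rpow_mul ht.le]
      have hexp : (q - p) * (1 / (p - q)) = -1 := by
        have hpq' : p - q ≠ 0 := sub_ne_zero.mpr hpq
        field_simp
        ring
      rw [hexp, Real.rpow_neg_one]
      field_simp
  have hg0 : ∀ t : ℝ, 0 ≤ t → 0 ≤ gCauchy p q t := by
    intro t ht
    unfold gCauchy
    split_ifs with h1 h2
    · exact Real.rpow_nonneg (by positivity) _
    · norm_num
    · exact Real.rpow_nonneg (base_pos p q t hp hq (lt_of_le_of_ne ht (Ne.symm h1)) h2).le _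
  exact ⟨hbal, fun L hL => Fg_isRev π hπ.1 _ hg0 hbal L hL⟩

end
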